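/- For a contact angle θ with 0 < θ < π/2, the height correction ĥ = (R/(2 cos θ)) · (2 − sin θ − arcsin(cos θ)/cos θ) is strictly positive for any R > 0. -/

import Mathlib

open Real

lemma aux_g_pos (x : ℝ) (hx0 : 0 < x) (hx1 : x < π / 2) :
    0 < 2 * Real.sin x - Real.sin x * Real.cos x - x := by
  set g : ℝ → ℝ := fun t => 2 * Real.sin t - Real.sin t * Real.cos t - t with hg
  have hmono : StrictMonoOn g (Set.Icc 0 (π / 2)) := by
    apply strictMonoOn_of_deriv_pos (convex_Icc _ _)
    · fun_prop
    · intro t ht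
      rw [interior_Icc] at ht
      have hder : HasDerivAt g (2 * Real.cos t - (Real.cos t * Real.cos t -
          Real.sin t * Real.sin t) - 1) t := by
        have h1 : HasDerivAt Real.sin (Real.cos t) t := Real.hasDerivAt_sin t
        have h2 : HasDerivAt Real.cos (-Real.sin t) t := Real.hasDerivAt_cos t
        have := ((h1.const_mul 2).sub (h1.mul h2)).sub (hasDerivAt_id t)
        exact this.congr_deriv (by ring)
      rw [hder.deriv]
      have hct : 0 < Real.cos t := Real.cos_pos_of_mem_Ioo
        ⟨by linarith [ht.1, Real.pi_pos], ht.2⟩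
      have hst : 0 < Real.sin t := Real.sin_pos_of_pos_of_lt_pi ht.1
        (by linarith [Real.pi_pos, ht.2])
      have hs : Real.sin t * Real.sin t = 1 - Real.cos t * Real.cos t := by
        have := Real.sin_sq_add_cos_sq t
        nlinarith [mul_pos hst hst, mul_pos hct (mul_pos hst hst)]
      nlinarith [mul_pos hst hst, mul_pos hct (mul_pos hst hst)]
  have h0 : g 0 = 0 := by simp [hg]
  have := hmono (Set.mem_Icc.mpr ⟨le_refl 0, by positivity⟩)
    (Set.mem_Icc.mpr ⟨hx0.le, hx1.le⟩) hx0
  rw [h0] at this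
  exact this

theorem height_correction_pos (θ R : ℝ) (hθ0 : 0 < θ) (hθ1 : θ < π / 2) (hR : 0 < R) :
    0 < R / (2 * Real.cos θ) *
      (2 - Real.sin θ - Real.arcsin (Real.cos θ) / Real.cos θ) := by
  have hc : 0 < Real.cos θ := Real.cos_pos_of_mem_Ioo ⟨by linarith [Real.pi_pos], hθ1⟩
  have harcsin : Real.arcsin (Real.cos θ) = π / 2 - θ := by
    rw [← Real.sin_pi_div_two_sub θ]
    exact Real.arcsin_sin (by linarith) (by linarith)
  have hkey := aux_g_pos (π / 2 - θ) (by linarith) (by linarith)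
  rw [Real.sin_pi_div_two_sub, Real.cos_pi_div_two_sub] at hkey
  rw [harcsin]
  have h2 : 0 < 2 - Real.sin θ - (π / 2 - θ) / Real.cos θ := by
    rw [sub_pos, div_lt_iff₀ hc]
    nlinarith
  have : 0 < R / (2 * Real.cos θ) := by positivity
  positivity
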